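/- Let K = (T, Σ, A) be a KB with closed predicates with T in normal form, let I_c be a core for K, and let J be a model of K that is an extension of I_c. Then every type that is realized in J belongs to LC(T, Σ, I_c); in particular, for every individual a occurring in K, type(a, J) ∈ LC(T, Σ, I_c). -/

import Mathlib

set_option autoImplicit false
set_option linter.unusedVariables false

/-! # ALCHOI with closed predicates: syntax -/

/-- Basic roles: role names `p` or their inverses `p⁻`. -/
inductive DLRole : Type
  | name : ℕ → DLRole
  | inv : ℕ → DLRole
  deriving DecidableEq

/-- The inverse `r⁻` of a basic role. -/
def DLRole.invert : DLRole → DLRole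
  | .name p => .inv p
  | .inv p => .name p

/-- The underlying role name of a basic role. -/
def DLRole.nameOf : DLRole → ℕ
  | .name p => p
  | .inv p => p

/-- ALCHOI concepts. -/
inductive DLConcept : Type
  | atom : ℕ → DLConcept            -- concept name
  | top : DLConcept
  | bot : DLConcept
  | nom : ℕ → DLConcept             -- nominal {a}
  | neg : DLConcept → DLConcept
  | conj : DLConcept → DLConcept → DLConcept
  | disj : DLConcept → DLConcept → DLConcept
  | ex : DLRole → DLConcept → DLConcept
  | all : DLRole → DLConcept → DLConcept
  deriving DecidableEq

/-- TBox inclusions: concept inclusions and role inclusions. -/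
inductive Inclusion : Type
  | concl : DLConcept → DLConcept → Inclusion
  | rolel : DLRole → DLRole → Inclusion
  deriving DecidableEq

/-- ABox assertions `A(a)`, `p(a,b)` (over concept and role *names*). -/
inductive Assertion : Type
  | ca : ℕ → ℕ → Assertion
  | ra : ℕ → ℕ → ℕ → Assertion
  deriving DecidableEq

abbrev TBox := List Inclusion
abbrev ABox := List Assertion

/-- A closed predicate is a concept name or a role name. -/
inductive ClosedPred : Type
  | cp : ℕ → ClosedPred
  | rp : ℕ → ClosedPred
  deriving DecidableEq

/-- A knowledge base with closed predicates. -/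
structure KB where
  tbox : TBox
  sig : Set ClosedPred
  abox : ABox

/-- Domain elements: named individuals (standard name assumption), fringe
individuals `c^α`, and anonymous elements. -/
inductive Elem : Type
  | ind : ℕ → Elem
  | fringe : ℕ → Inclusion → Elem
  | anon : ℕ → Elem
  deriving DecidableEq

def Elem.isFringe : Elem → Prop
  | .fringe _ _ => True
  | _ => False

/-! # Semantics -/

/-- An interpretation. -/
structure Interp where
  dom : Set Elem
  dom_nonempty : dom.Nonempty
  intC : ℕ → Set Elem
  intR : ℕ → Set (Elem × Elem)
  intI : ℕ → Elem
  intC_sub : ∀ A, intC A ⊆ dom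
  intR_sub : ∀ p, ∀ x ∈ intR p, x.1 ∈ dom ∧ x.2 ∈ dom
  intI_mem : ∀ a, intI a ∈ dom

/-- Extension of a basic role. -/
def Interp.roleExt (I : Interp) : DLRole → Set (Elem × Elem)
  | .name p => I.intR p
  | .inv p => {x | (x.2, x.1) ∈ I.intR p}

/-- Extension of a concept. -/
def Interp.cExt (I : Interp) : DLConcept → Set Elem
  | .atom A => I.intC A
  | .top => I.dom
  | .bot => ∅
  | .nom a => {I.intI a}
  | .neg C => I.dom \ I.cExt C
  | .conj C D => I.cExt C ∩ I.cExt D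
  | .disj C D => I.cExt C ∪ I.cExt D
  | .ex r C => {e | ∃ f, (e, f) ∈ I.roleExt r ∧ f ∈ I.cExt C}
  | .all r C => {e | e ∈ I.dom ∧ ∀ f, (e, f) ∈ I.roleExt r → f ∈ I.cExt C}

def Interp.satIncl (I : Interp) : Inclusion → Prop
  | .concl C D => I.cExt C ⊆ I.cExt D
  | .rolel r s => I.roleExt r ⊆ I.roleExt s

def Interp.satAssert (I : Interp) : Assertion → Prop
  | .ca A a => I.intI a ∈ I.intC A
  | .ra p a b => (I.intI a, I.intI b) ∈ I.intR p

def Interp.satTBox (I : Interp) (T : TBox) : Prop := ∀ α ∈ T, I.satIncl α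

def Interp.satABox (I : Interp) (Ab : ABox) : Prop := ∀ β ∈ Ab, I.satAssert β

/-- `I ⊨_Σ A`: `I` satisfies the ABox, and every membership in a closed
predicate is explicitly asserted. -/
def Interp.satABoxClosed (I : Interp) (sig : Set ClosedPred) (Ab : ABox) : Prop :=
  I.satABox Ab ∧
  (∀ A : ℕ, ClosedPred.cp A ∈ sig → ∀ e ∈ I.intC A,
      ∃ a : ℕ, e = Elem.ind a ∧ Assertion.ca A a ∈ Ab) ∧
  (∀ p : ℕ, ClosedPred.rp p ∈ sig → ∀ x ∈ I.intR p,
      ∃ a b : ℕ, x = (Elem.ind a, Elem.ind b) ∧ Assertion.ra p a b ∈ Ab)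

/-! ## Symbols occurring in a KB -/

def DLConcept.noms : DLConcept → Set ℕ
  | .nom a => {a}
  | .neg C => C.noms
  | .conj C D => C.noms ∪ D.noms
  | .disj C D => C.noms ∪ D.noms
  | .ex _ C => C.noms
  | .all _ C => C.noms
  | _ => ∅

def Inclusion.noms : Inclusion → Set ℕ
  | .concl C D => C.noms ∪ D.noms
  | .rolel _ _ => ∅

def Assertion.inds : Assertion → Set ℕ
  | .ca _ a => {a}
  | .ra _ a b => {a, b}

/-- The individuals occurring in a KB (nominals of the TBox and individuals
of the ABox). -/
def KB.inds (K : KB) : Set ℕ :=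
  (⋃ α ∈ K.tbox, Inclusion.noms α) ∪ ⋃ β ∈ K.abox, Assertion.inds β

def DLConcept.cnames : DLConcept → Set ℕ
  | .atom A => {A}
  | .neg C => C.cnames
  | .conj C D => C.cnames ∪ D.cnames
  | .disj C D => C.cnames ∪ D.cnames
  | .ex _ C => C.cnames
  | .all _ C => C.cnames
  | _ => ∅

def DLConcept.rnames : DLConcept → Set ℕ
  | .neg C => C.rnames
  | .conj C D => C.rnames ∪ D.rnames
  | .disj C D => C.rnames ∪ D.rnames
  | .ex r C => {r.nameOf} ∪ C.rnames
  | .all r C => {r.nameOf} ∪ C.rnames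
  | _ => ∅

def Inclusion.cnames : Inclusion → Set ℕ
  | .concl C D => C.cnames ∪ D.cnames
  | .rolel _ _ => ∅

def Inclusion.rnames : Inclusion → Set ℕ
  | .concl C D => C.rnames ∪ D.rnames
  | .rolel r s => {r.nameOf, s.nameOf}

def TBox.cnames (T : TBox) : Set ℕ := ⋃ α ∈ T, Inclusion.cnames α
def TBox.rnames (T : TBox) : Set ℕ := ⋃ α ∈ T, Inclusion.rnames α

def Assertion.cnames : Assertion → Set ℕ
  | .ca A _ => {A}
  | .ra _ _ _ => ∅

def Assertion.rnames : Assertion → Set ℕ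
  | .ca _ _ => ∅
  | .ra p _ _ => {p}

def KB.cnames (K : KB) : Set ℕ := TBox.cnames K.tbox ∪ ⋃ β ∈ K.abox, Assertion.cnames β
def KB.rnames (K : KB) : Set ℕ := TBox.rnames K.tbox ∪ ⋃ β ∈ K.abox, Assertion.rnames β

/-- An ABox over the given sets of concept names and role names. -/
def ABoxOver (Ab : ABox) (cns rns : Set ℕ) : Prop :=
  ∀ β ∈ Ab, match β with
    | Assertion.ca A _ => A ∈ cns
    | Assertion.ra p _ _ => p ∈ rns

/-- `I ⊨ K` for a KB with closed predicates: the standard name assumption for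
the individuals occurring in `K`, satisfaction of the TBox, and `I ⊨_Σ A`. -/
def isModel (I : Interp) (K : KB) : Prop :=
  (∀ a ∈ K.inds, I.intI a = Elem.ind a ∧ Elem.ind a ∈ I.dom) ∧
  I.satTBox K.tbox ∧
  I.satABoxClosed K.sig K.abox

/-! # Normal form -/

inductive IsBasicConcept : DLConcept → Prop
  | atom (A : ℕ) : IsBasicConcept (.atom A)
  | top : IsBasicConcept .top
  | bot : IsBasicConcept .bot
  | nom (a : ℕ) : IsBasicConcept (.nom a)

inductive IsConjOfBasic : DLConcept → Prop
  | basic {C : DLConcept} : IsBasicConcept C → IsConjOfBasic C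
  | conj {C D : DLConcept} : IsConjOfBasic C → IsConjOfBasic D → IsConjOfBasic (.conj C D)

inductive IsDisjOfBasic : DLConcept → Prop
  | basic {C : DLConcept} : IsBasicConcept C → IsDisjOfBasic C
  | disj {C D : DLConcept} : IsDisjOfBasic C → IsDisjOfBasic D → IsDisjOfBasic (.disj C D)

/-- Inclusions of shape (N1). -/
def IsN1 : Inclusion → Prop
  | .concl C D => IsConjOfBasic C ∧ IsDisjOfBasic D
  | .rolel _ _ => False

/-- The existential inclusion `A ⊑ ∃r.A'` (shape (N2)). -/
def exIncl (A : ℕ) (r : DLRole) (A' : ℕ) : Inclusion :=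
  .concl (.atom A) (.ex r (.atom A'))

def Inclusion.isExistential (α : Inclusion) : Prop := ∃ A r A', α = exIncl A r A'

/-- Inclusions in normal form (N1)--(N4). -/
inductive NormalIncl : Inclusion → Prop
  | n1 {C D : DLConcept} : IsConjOfBasic C → IsDisjOfBasic D → NormalIncl (.concl C D)
  | n2 (A : ℕ) (r : DLRole) (A' : ℕ) : NormalIncl (exIncl A r A')
  | n3 (A : ℕ) (r : DLRole) (A' : ℕ) : NormalIncl (.concl (.atom A) (.all r (.atom A')))
  | n4 (r s : DLRole) : NormalIncl (.rolel r s)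

/-- A TBox in normal form. -/
def NormalTBox (T : TBox) : Prop := ∀ α ∈ T, NormalIncl α

/-! # Role hierarchy and closed roles -/

/-- `r ⊑*_T s`. -/
inductive subRole (T : TBox) : DLRole → DLRole → Prop
  | refl (r : DLRole) : subRole T r r
  | inv {r s : DLRole} : subRole T r s → subRole T r.invert s.invert
  | step {r r₁ s : DLRole} : subRole T r r₁ → Inclusion.rolel r₁ s ∈ T → subRole T r s

/-- `r ∈_T Σ`: `r ⊑*_T s` for some `s` with `s` or `s⁻` in `Σ`. -/
def roleClosed (T : TBox) (sig : Set ClosedPred) (r : DLRole) : Prop :=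
  ∃ s : DLRole, subRole T r s ∧ ClosedPred.rp s.nameOf ∈ sig
/-! # Conjunctive queries -/

/-- Query atoms `A(x)`, `r(x,y)` over variables. -/
inductive QAtom : Type
  | ca : ℕ → ℕ → QAtom
  | ra : ℕ → ℕ → ℕ → QAtom
  deriving DecidableEq

def QAtom.vars : QAtom → Set ℕ
  | .ca _ x => {x}
  | .ra _ x y => {x, y}

/-- Variables of a set of atoms. -/
def qvarsS (s : Set QAtom) : Set ℕ := ⋃ a ∈ s, QAtom.vars a

/-- A conjunctive query with answer variables `ansVars`; all remaining
variables are existentially quantified. -/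
structure CQuery where
  atoms : List QAtom
  ansVars : List ℕ
  ansVars_mem : ∀ x ∈ ansVars, x ∈ qvarsS {a | a ∈ atoms}

def CQuery.atomSet (q : CQuery) : Set QAtom := {a | a ∈ q.atoms}
def CQuery.varSet (q : CQuery) : Set ℕ := qvarsS q.atomSet

def QAtom.satBy : QAtom → Interp → (ℕ → Elem) → Prop
  | .ca A x, I, π => π x ∈ I.intC A
  | .ra p x y, I, π => (π x, π y) ∈ I.intR p

/-- `I ⊨ q(t)` for a tuple `t` of domain elements: some map `π` of the
variables into the domain sends the answer tuple to `t` and satisfies all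
atoms. -/
def Interp.satCQ (I : Interp) (q : CQuery) (t : List Elem) : Prop :=
  ∃ π : ℕ → Elem, (∀ v ∈ q.varSet, π v ∈ I.dom) ∧
    q.ansVars.map π = t ∧ ∀ a ∈ q.atoms, a.satBy I π

/-- `K ⊨ q(t)` for a tuple `t` of individuals. -/
def KB.entailsCQ (K : KB) (q : CQuery) (t : List ℕ) : Prop :=
  ∀ I : Interp, isModel I K → I.satCQ q (t.map Elem.ind)

/-- An ontology-mediated query. -/
structure OMQ where
  tbox : TBox
  sig : Set ClosedPred
  q : CQuery

def OMQ.kb (Q : OMQ) (Ab : ABox) : KB := ⟨Q.tbox, Q.sig, Ab⟩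

/-- `t ∈ cert(Q, A)`: `t` is a tuple (of the query's arity) of individuals
occurring in the KB that is entailed. -/
def certOMQ (Q : OMQ) (Ab : ABox) (t : List ℕ) : Prop :=
  t.length = Q.q.ansVars.length ∧ (∀ a ∈ t, a ∈ (Q.kb Ab).inds) ∧
  (Q.kb Ab).entailsCQ Q.q t

/-- c-variables of an OMQ. -/
def isCVar (Q : OMQ) (x : ℕ) : Prop :=
  x ∈ Q.q.ansVars ∨
  (∃ p y, (QAtom.ra p x y ∈ Q.q.atoms ∨ QAtom.ra p y x ∈ Q.q.atoms) ∧
      roleClosed Q.tbox Q.sig (.name p)) ∨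
  (∃ A, QAtom.ca A x ∈ Q.q.atoms ∧ ClosedPred.cp A ∈ Q.sig)

/-- A c-safe OMQ: all variables of the query are c-variables. -/
def cSafe (Q : OMQ) : Prop := ∀ x ∈ Q.q.varSet, isCVar Q x

/-! ## Query graph, acyclicity -/

/-- The query (Gaifman) graph of a set of atoms. -/
def queryGraphS (s : Set QAtom) : SimpleGraph ℕ where
  Adj x y := x ≠ y ∧ ∃ a ∈ s, x ∈ a.vars ∧ y ∈ a.vars
  symm := ⟨fun x y h => ⟨h.1.symm, h.2.imp fun a h' => ⟨h'.1, h'.2.2, h'.2.1⟩⟩⟩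
  loopless := ⟨fun x h => h.1 rfl⟩

def CQConnectedS (s : Set QAtom) : Prop :=
  ∀ x ∈ qvarsS s, ∀ y ∈ qvarsS s, (queryGraphS s).Reachable x y

/-- Acyclic CQ: the query graph is acyclic, and every edge carries exactly
one role atom. -/
def CQAcyclicS (s : Set QAtom) : Prop :=
  (queryGraphS s).IsAcyclic ∧
  ∀ x y, (queryGraphS s).Adj x y →
    ∃! a : QAtom, a ∈ s ∧ ∃ p, a = QAtom.ra p x y ∨ a = QAtom.ra p y x

/-- `q⁻`: the atoms of `Q` minus the role atoms connecting two c-variables. -/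
def qminus (Q : OMQ) : Set QAtom :=
  {a | a ∈ Q.q.atoms ∧ ¬ ∃ p x y, a = QAtom.ra p x y ∧ isCVar Q x ∧ isCVar Q y}

/-- c-acyclicity: `q⁻` is acyclic and every connected component of `G(q⁻)`
contains exactly one c-variable. -/
def cAcyclic (Q : OMQ) : Prop :=
  CQAcyclicS (qminus Q) ∧
  ∀ x ∈ qvarsS (qminus Q),
    ∃! y, y ∈ qvarsS (qminus Q) ∧ (queryGraphS (qminus Q)).Reachable x y ∧ isCVar Q y

/-- Instance query: a single atom, all of whose variables are answer variables. -/
def isInstanceQuery (q : CQuery) : Prop :=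
  (∃ a : QAtom, q.atoms = [a]) ∧ ∀ v ∈ q.varSet, v ∈ q.ansVars

/-! ## Rooted tree presentations of acyclic CQs and query concepts -/

/-- Rooted trees presenting connected acyclic CQs: a node carries its
variable, the concept names labelling it, and its children together with the
(possibly inverse) role connecting to them. -/
inductive QTree : Type
  | node : ℕ → List ℕ → List (DLRole × QTree) → QTree

def QTree.root : QTree → ℕ
  | .node x _ _ => x

def conjOfList : List DLConcept → DLConcept
  | [] => .top
  | C :: rest => .conj C (conjOfList rest)

mutual
  /-- The query concept `C_{q,x}` determined by a rooted tree presentation. -/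
  def QTree.concept : QTree → DLConcept
    | .node _ cs children =>
        .conj (conjOfList (cs.map DLConcept.atom)) (QTree.childConcept children)
  def QTree.childConcept : List (DLRole × QTree) → DLConcept
    | [] => .top
    | (r, t) :: rest => .conj (.ex r (QTree.concept t)) (QTree.childConcept rest)
end

/-- The role atom represented by a tree edge from `x` to `y` labelled `r`. -/
def edgeAtom (x : ℕ) (r : DLRole) (y : ℕ) : QAtom :=
  match r with
  | .name p => .ra p x y
  | .inv p => .ra p y x

mutual
  /-- The set of atoms represented by a tree. -/
  def QTree.atomSet : QTree → Set QAtom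
    | .node x cs children =>
        {a | ∃ A ∈ cs, a = QAtom.ca A x} ∪ QTree.childAtomSet x children
  def QTree.childAtomSet : ℕ → List (DLRole × QTree) → Set QAtom
    | _, [] => ∅
    | x, (r, t) :: rest =>
        insert (edgeAtom x r t.root) (QTree.atomSet t) ∪ QTree.childAtomSet x rest
end

mutual
  def QTree.varList : QTree → List ℕ
    | .node x _ children => x :: QTree.childVarList children
  def QTree.childVarList : List (DLRole × QTree) → List ℕ
    | [] => []
    | (_, t) :: rest => QTree.varList t ++ QTree.childVarList rest
end

/-- `t` is the rooted tree presentation of the CQ `q` (viewed as a set of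
atoms) with root variable `x`. -/
def QTree.presents (t : QTree) (q : Set QAtom) (x : ℕ) : Prop :=
  t.root = x ∧ t.atomSet = q ∧ t.varList.Nodup
/-! ## Concept and role names occurring in an OMQ -/

def QAtom.cnames : QAtom → Set ℕ
  | .ca A _ => {A}
  | .ra _ _ _ => ∅

def QAtom.rnames : QAtom → Set ℕ
  | .ca _ _ => ∅
  | .ra p _ _ => {p}

def OMQ.cnames (Q : OMQ) : Set ℕ := TBox.cnames Q.tbox ∪ ⋃ a ∈ Q.q.atoms, QAtom.cnames a
def OMQ.rnames (Q : OMQ) : Set ℕ := TBox.rnames Q.tbox ∪ ⋃ a ∈ Q.q.atoms, QAtom.rnames a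
/-! # Cores and extensions -/

/-- The possible domain of a core for `K`: the individuals of `K` plus the
fringe individuals `c^α` for existential inclusions `α` of the TBox. -/
def coreDom (K : KB) : Set Elem :=
  {e | ∃ a ∈ K.inds, e = Elem.ind a} ∪
  {e | ∃ a ∈ K.inds, ∃ α ∈ K.tbox, Inclusion.isExistential α ∧ e = Elem.fringe a α}

/-- A core for a KB with closed predicates (conditions (c1)--(c5)). -/
structure IsCore (Ic : Interp) (K : KB) : Prop where
  dom_sub : Ic.dom ⊆ coreDom K
  inds_sub : ∀ a ∈ K.inds, Elem.ind a ∈ Ic.dom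
  sna : ∀ a ∈ K.inds, Ic.intI a = Elem.ind a
  c2 : Ic.satABoxClosed K.sig K.abox
  c3 : ∀ α ∈ K.tbox,
        (¬ α.isExistential → Ic.satIncl α) ∧
        (∀ A r A', α = exIncl A r A' → roleClosed K.tbox K.sig r → Ic.satIncl α)
  c4 : ∀ p : ℕ, ∀ x ∈ Ic.intR p,
        (∃ a b, a ∈ K.inds ∧ b ∈ K.inds ∧ x = (Elem.ind a, Elem.ind b)) ∨
        (∃ a α, a ∈ K.inds ∧ x = (Elem.ind a, Elem.fringe a α)) ∨
        (∃ a α, a ∈ K.inds ∧ x = (Elem.fringe a α, Elem.ind a))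
  c5 : ∀ e ∈ Ic.dom, ¬ e.isFringe →
        ∀ A r A', exIncl A r A' ∈ K.tbox → e ∈ Ic.intC A →
          e ∈ Ic.cExt (.ex r (.atom A'))

/-- `J` is an extension of the core `Ic` (with respect to the closed
predicates `sig`). -/
structure IsExtension (J Ic : Interp) (sig : Set ClosedPred) : Prop where
  dom_sub : Ic.dom ⊆ J.dom
  cAgree : ∀ A : ℕ, Ic.intC A = J.intC A ∩ Ic.dom
  rAgree : ∀ p : ℕ, Ic.intR p = J.intR p ∩ (Ic.dom ×ˢ Ic.dom)
  closedC : ∀ A : ℕ, ClosedPred.cp A ∈ sig → J.intC A = Ic.intC A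
  closedR : ∀ p : ℕ, ClosedPred.rp p ∈ sig → J.intR p = Ic.intR p

/-! # Types and the model building game -/

/-- The basic concepts occurring in a concept. -/
def DLConcept.basics : DLConcept → Set DLConcept
  | .atom A => {.atom A}
  | .nom a => {.nom a}
  | .top => {.top}
  | .bot => {.bot}
  | .neg C => C.basics
  | .conj C D => C.basics ∪ D.basics
  | .disj C D => C.basics ∪ D.basics
  | .ex _ C => C.basics
  | .all _ C => C.basics

def Inclusion.basics : Inclusion → Set DLConcept
  | .concl C D => C.basics ∪ D.basics
  | .rolel _ _ => ∅

/-- `N_C⁺(T)`: the basic concepts occurring in `T`, together with `⊤`, `⊥`. -/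
def TBox.basicConcepts (T : TBox) : Set DLConcept :=
  {DLConcept.top, DLConcept.bot} ∪ ⋃ α ∈ T, Inclusion.basics α

/-- A type over `T`. -/
def IsType (T : TBox) (τ : Set DLConcept) : Prop :=
  τ ⊆ TBox.basicConcepts T ∧ DLConcept.top ∈ τ ∧ DLConcept.bot ∉ τ

/-- `type(e, I)`. -/
def typeOf (T : TBox) (I : Interp) (e : Elem) : Set DLConcept :=
  {B | B ∈ TBox.basicConcepts T ∧ e ∈ I.cExt B}

/-- `τ` is realized in `I`. -/
def realizedIn (T : TBox) (I : Interp) (τ : Set DLConcept) : Prop :=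
  ∃ e ∈ I.dom, typeOf T I e = τ

def conjuncts : DLConcept → Set DLConcept
  | .conj C D => conjuncts C ∪ conjuncts D
  | C => {C}

def disjuncts : DLConcept → Set DLConcept
  | .disj C D => disjuncts C ∪ disjuncts D
  | C => {C}

/-- `τ` satisfies an (N1) inclusion. -/
def typeSatN1 (τ : Set DLConcept) : Inclusion → Prop
  | .concl C D => conjuncts C ⊆ τ → ∃ B ∈ disjuncts D, B ∈ τ
  | .rolel _ _ => True

/-- c-types. -/
def IsCType (T : TBox) (sig : Set ClosedPred) (τ : Set DLConcept) : Prop :=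
  (∃ a, DLConcept.nom a ∈ τ) ∨
  (∃ A, DLConcept.atom A ∈ τ ∧ ClosedPred.cp A ∈ sig) ∨
  (∃ A r A', exIncl A r A' ∈ T ∧ roleClosed T sig r ∧ DLConcept.atom A ∈ τ)

/-- The locally consistent types `LC(T, Σ, I_c)`. -/
def LC (T : TBox) (sig : Set ClosedPred) (Ic : Interp) : Set (Set DLConcept) :=
  {τ | IsType T τ ∧ (∀ α ∈ T, IsN1 α → typeSatN1 τ α) ∧
       (IsCType T sig τ → realizedIn T Ic τ)}

/-- Conditions (C1) and (C2): `τ'` is a legal response to the challenge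
`A ⊑ ∃r.A'` against the current type `τ`. -/
def LegalResponse (T : TBox) (A : ℕ) (r : DLRole) (A' : ℕ) (τ τ' : Set DLConcept) : Prop :=
  DLConcept.atom A' ∈ τ' ∧
  ∀ A₁ s A₂, Inclusion.concl (.atom A₁) (.all s (.atom A₂)) ∈ T →
    (subRole T r s → DLConcept.atom A₁ ∈ τ → DLConcept.atom A₂ ∈ τ') ∧
    (subRole T r.invert s → DLConcept.atom A₁ ∈ τ' → DLConcept.atom A₂ ∈ τ)

/-- A strategy for Bob, as a partial function. -/
abbrev Strategy := Set DLConcept → Inclusion → Option (Set DLConcept)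

/-- Well-formedness of a strategy: it is defined only on pairs of a non-c-type
`τ` and an existential inclusion of `T` triggered by `τ`, and returns a type
satisfying (C1) and (C2). -/
def IsStrategy (T : TBox) (sig : Set ClosedPred) (str : Strategy) : Prop :=
  ∀ τ α τ', str τ α = some τ' →
    IsType T τ ∧ ¬ IsCType T sig τ ∧ IsType T τ' ∧
    ∃ A r A', α = exIncl A r A' ∧ α ∈ T ∧ DLConcept.atom A ∈ τ ∧
      LegalResponse T A r A' τ τ'

/-- A finite run `a α₁ τ₁ α₂ τ₂ ⋯`. -/
structure GRun where
  start : Elem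
  steps : List (Inclusion × Set DLConcept)

/-- `tail(w)`. -/
def GRun.tail (T : TBox) (Ic : Interp) (w : GRun) : Set DLConcept :=
  match w.steps.getLast? with
  | some s => s.2
  | none => typeOf T Ic w.start

/-- `w` is a (finite) run of the game on the core `Ic`: it starts at a fringe
individual of `Ic`, its inclusions are existential inclusions of `T`, its
types are types over `T`, and only its last type may be a c-type. -/
def IsRunOn (T : TBox) (sig : Set ClosedPred) (Ic : Interp) (w : GRun) : Prop :=
  (∃ c α, w.start = Elem.fringe c α) ∧ w.start ∈ Ic.dom ∧
  (∀ s ∈ w.steps, s.1 ∈ T ∧ s.1.isExistential ∧ IsType T s.2) ∧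
  (∀ (i : ℕ) s, w.steps[i]? = some s → i + 1 < w.steps.length → ¬ IsCType T sig s.2)

def FollowsFrom (str : Strategy) : Set DLConcept → List (Inclusion × Set DLConcept) → Prop
  | _, [] => True
  | τ, (α, τ') :: rest => str τ α = some τ' ∧ FollowsFrom str τ' rest

/-- `w` follows the strategy `str` on `Ic`. -/
def RunFollows (T : TBox) (Ic : Interp) (str : Strategy) (w : GRun) : Prop :=
  FollowsFrom str (typeOf T Ic w.start) w.steps

/-- A non-losing strategy for Bob on `Ic`. -/
def NonLosing (T : TBox) (sig : Set ClosedPred) (Ic : Interp) (str : Strategy) : Prop :=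
  IsStrategy T sig str ∧
  ∀ w : GRun, IsRunOn T sig Ic w → RunFollows T Ic str w →
    w.tail T Ic ∈ LC T sig Ic ∧
    (¬ IsCType T sig (w.tail T Ic) →
      ∀ A r A', exIncl A r A' ∈ T → DLConcept.atom A ∈ w.tail T Ic →
        ∃ τ', str (w.tail T Ic) (exIncl A r A') = some τ')

/-! # The marking algorithm -/

/-- The types marked by the type elimination algorithm `Mark(T, Σ, I_c)`:
the least set containing all types violating some (N1) inclusion, all
c-types not realized in `I_c`, and closed under the rule (M_∃): a type gets
marked if some existential inclusion triggered by it has all its legal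
responses already marked. -/
inductive Marked (T : TBox) (sig : Set ClosedPred) (Ic : Interp) : Set DLConcept → Prop
  | n1 {τ : Set DLConcept} : IsType T τ →
      (∃ α ∈ T, IsN1 α ∧ ¬ typeSatN1 τ α) → Marked T sig Ic τ
  | closed {τ : Set DLConcept} : IsType T τ → IsCType T sig τ →
      ¬ realizedIn T Ic τ → Marked T sig Ic τ
  | exStep {τ : Set DLConcept} {A : ℕ} {r : DLRole} {A' : ℕ} :
      IsType T τ → exIncl A r A' ∈ T → DLConcept.atom A ∈ τ →
      (∀ τ', IsType T τ' → LegalResponse T A r A' τ τ' → Marked T sig Ic τ') →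
      Marked T sig Ic τ
/-! # Datalog with disjunction and negation, stable model semantics -/

/-- Predicate symbols: the concept names (unary), the role names (binary),
the built-in inequality predicate, and auxiliary predicates. -/
inductive DPred : Type
  | concept : ℕ → DPred
  | role : ℕ → DPred
  | neq : DPred
  | aux : ℕ → DPred
  deriving DecidableEq

inductive DTerm : Type
  | var : ℕ → DTerm
  | const : ℕ → DTerm
  deriving DecidableEq

structure DAtom where
  pred : DPred
  args : List DTerm
  deriving DecidableEq

/-- Ground atoms (over the constants). -/
structure GAtom where
  pred : DPred
  args : List ℕ
  deriving DecidableEq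

/-- A rule `h₁ ∨ ⋯ ∨ hₙ ← b₁, …, bₖ, not c₁, …, not cₘ`. -/
structure DRule where
  head : List DAtom
  posBody : List DAtom
  negBody : List DAtom
  deriving DecidableEq

abbrev DProgram := List DRule

def DTerm.constOf : DTerm → Set ℕ
  | .var _ => ∅
  | .const c => {c}

def DTerm.varOf : DTerm → Set ℕ
  | .var v => {v}
  | .const _ => ∅

def DAtom.consts (a : DAtom) : Set ℕ := ⋃ t ∈ a.args, DTerm.constOf t
def DAtom.vars (a : DAtom) : Set ℕ := ⋃ t ∈ a.args, DTerm.varOf t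
def DRule.atoms (ρ : DRule) : List DAtom := ρ.head ++ ρ.posBody ++ ρ.negBody
def DRule.consts (ρ : DRule) : Set ℕ := ⋃ a ∈ ρ.atoms, DAtom.consts a
def DRule.vars (ρ : DRule) : Set ℕ := ⋃ a ∈ ρ.atoms, DAtom.vars a
def progConsts (P : DProgram) : Set ℕ := ⋃ ρ ∈ P, DRule.consts ρ

/-- Safety: every variable of the rule occurs in a positive body atom. -/
def DRule.safe (ρ : DRule) : Prop := ∀ v ∈ ρ.vars, ∃ a ∈ ρ.posBody, v ∈ a.vars

def safeProgram (P : DProgram) : Prop := ∀ ρ ∈ P, ρ.safe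
def nonDisjunctive (P : DProgram) : Prop := ∀ ρ ∈ P, ρ.head.length ≤ 1
def positiveProgram (P : DProgram) : Prop := ∀ ρ ∈ P, ρ.negBody = []
/-- No occurrence of the built-in inequality predicate. -/
def neqFree (P : DProgram) : Prop := ∀ ρ ∈ P, ∀ a ∈ ρ.atoms, a.pred ≠ DPred.neq

/-- Ground rules. -/
structure GRRule where
  head : List GAtom
  posBody : List GAtom
  negBody : List GAtom

def DTerm.subst (σ : ℕ → ℕ) : DTerm → ℕ
  | .var v => σ v
  | .const c => c

def DAtom.inst (σ : ℕ → ℕ) (a : DAtom) : GAtom := ⟨a.pred, a.args.map (DTerm.subst σ)⟩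

def DRule.inst (σ : ℕ → ℕ) (ρ : DRule) : GRRule :=
  ⟨ρ.head.map (DAtom.inst σ), ρ.posBody.map (DAtom.inst σ), ρ.negBody.map (DAtom.inst σ)⟩

/-- The grounding of a program: all instances of its rules over the
constants occurring in the program. -/
def grounding (P : DProgram) : Set GRRule :=
  {g | ∃ ρ ∈ P, ∃ σ : ℕ → ℕ, (∀ v ∈ DRule.vars ρ, σ v ∈ progConsts P) ∧ g = DRule.inst σ ρ}

/-- A constant occurring in a non-inequality atom of `I`. -/
def activeConst (I : Finset GAtom) (c : ℕ) : Prop :=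
  ∃ g ∈ I, g.pred ≠ DPred.neq ∧ c ∈ g.args

/-- The built-in semantics of the inequality predicate: `a ≠ b` holds in `I`
iff `a` and `b` are distinct constants both occurring in non-inequality atoms
of `I`. -/
def respectsNeq (I : Finset GAtom) : Prop :=
  ∀ args : List ℕ, (⟨DPred.neq, args⟩ : GAtom) ∈ I ↔
    ∃ a b : ℕ, args = [a, b] ∧ a ≠ b ∧ activeConst I a ∧ activeConst I b

/-- `I` is a (Herbrand) model of a set of positive ground rules. -/
def isHModel (I : Finset GAtom) (G : Set GRRule) : Prop :=
  respectsNeq I ∧ ∀ g ∈ G, (∀ b ∈ g.posBody, b ∈ I) → ∃ h ∈ g.head, h ∈ I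

/-- The GL-reduct of a set of ground rules with respect to `I`. -/
def glReduct (G : Set GRRule) (I : Finset GAtom) : Set GRRule :=
  {g' | ∃ g ∈ G, (∀ n ∈ g.negBody, n ∉ I) ∧ g' = ⟨g.head, g.posBody, []⟩}

/-- `I` is a stable model of `P`: a minimal model of the GL-reduct of the
grounding of `P` with respect to `I`. -/
def isStable (P : DProgram) (I : Finset GAtom) : Prop :=
  isHModel I (glReduct (grounding P) I) ∧
  ∀ J : Finset GAtom, isHModel J (glReduct (grounding P) I) → J ⊆ I → J = I

/-- ABox assertions as facts. -/
def assertFact : Assertion → DRule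
  | .ca A a => ⟨[⟨DPred.concept A, [DTerm.const a]⟩], [], []⟩
  | .ra p a b => ⟨[⟨DPred.role p, [DTerm.const a, DTerm.const b]⟩], [], []⟩

def aboxFacts (Ab : ABox) : DProgram := Ab.map assertFact

/-- Ground atoms as facts. -/
def gfact (g : GAtom) : DRule := ⟨[⟨g.pred, g.args.map DTerm.const⟩], [], []⟩

def factProg (F : List GAtom) : DProgram := F.map gfact

def GAtom.rename (ρ : ℕ → ℕ) (g : GAtom) : GAtom := ⟨g.pred, g.args.map ρ⟩

def gconsts (F : List GAtom) : Set ℕ := ⋃ g ∈ F, {c | c ∈ g.args}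

/-- `t` is a certain answer to the query `(P, q̂)` over the database `D`:
`q̂(t)` belongs to every stable model of `P ∪ D`. -/
def certD (P : DProgram) (qp : DPred) (D : DProgram) (t : List ℕ) : Prop :=
  ∀ I : Finset GAtom, isStable (P ++ D) I → (⟨qp, t⟩ : GAtom) ∈ I

/-! Basic concepts are concept names, `⊤`, `⊥` and nominals, and `J` agrees with `I_c` on all of
them at core elements, so a core element has the same type in `I_c` and in `J`. The closed
predicates confine every element of a c-type of `J` to the core (for `A ⊑ ∃r.A'` with
`r ∈_T Σ` through the `r`-edge that `J` must provide), so c-types realized in `J` are realized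
in `I_c`. The (N1) inclusions hold for types realized in `J` because `J` is a model of `T`. -/

theorem DLConcept.isBasicConcept_of_mem_basics {B C : DLConcept} (h : B ∈ C.basics) :
    IsBasicConcept B := by
  induction C with
  | atom | top | bot | nom => rw [Set.mem_singleton_iff.mp h]; constructor
  | neg _ ih | ex _ _ ih | all _ _ ih => exact ih h
  | conj _ _ ihC ihD | disj _ _ ihC ihD => exact h.elim ihC ihD

theorem DLConcept.mem_noms_of_nom_mem_basics {a : ℕ} {C : DLConcept}
    (h : DLConcept.nom a ∈ C.basics) : a ∈ C.noms := by
  induction C with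
  | atom | top | bot => simp [DLConcept.basics] at h
  | nom => simpa [DLConcept.basics, DLConcept.noms, eq_comm] using h
  | neg _ ih | ex _ _ ih | all _ _ ih => exact ih h
  | conj _ _ ihC ihD | disj _ _ ihC ihD => exact h.imp ihC ihD

theorem TBox.isBasicConcept_of_mem_basicConcepts {T : TBox} {B : DLConcept}
    (h : B ∈ TBox.basicConcepts T) : IsBasicConcept B := by
  rcases h with (rfl | rfl) | h
  · exact .top
  · exact .bot
  · obtain ⟨α, -, hB⟩ := Set.mem_iUnion₂.mp h
    cases α with
    | concl C D =>
        exact hB.elim DLConcept.isBasicConcept_of_mem_basics DLConcept.isBasicConcept_of_mem_basics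
    | rolel => exact hB.elim

theorem KB.mem_inds_of_nom_mem_basicConcepts {K : KB} {a : ℕ}
    (h : DLConcept.nom a ∈ TBox.basicConcepts K.tbox) : a ∈ K.inds := by
  rcases h with (h | h) | h
  · cases h
  · cases h
  · obtain ⟨α, hα, hB⟩ := Set.mem_iUnion₂.mp h
    refine Or.inl (Set.mem_iUnion₂.mpr ⟨α, hα, ?_⟩)
    cases α with
    | concl C D =>
        exact hB.imp DLConcept.mem_noms_of_nom_mem_basics DLConcept.mem_noms_of_nom_mem_basics
    | rolel => exact hB.elim

theorem conjuncts_eq_singleton {C : DLConcept} (h : IsBasicConcept C) : conjuncts C = {C} := by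
  cases h <;> rfl

theorem disjuncts_eq_singleton {C : DLConcept} (h : IsBasicConcept C) : disjuncts C = {C} := by
  cases h <;> rfl

theorem disjuncts_subset_basics {D : DLConcept} (hD : IsDisjOfBasic D) :
    disjuncts D ⊆ D.basics := by
  induction hD with
  | basic hB => rw [disjuncts_eq_singleton hB]; cases hB <;> rfl
  | disj _ _ ihC ihD => exact Set.union_subset_union ihC ihD

namespace Interp

variable {I : Interp} {e : Elem}

theorem mem_cExt_of_conjuncts {C : DLConcept} (hC : IsConjOfBasic C)
    (h : ∀ B ∈ conjuncts C, e ∈ I.cExt B) : e ∈ I.cExt C := by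
  induction hC with
  | basic hB => exact h _ (by rw [conjuncts_eq_singleton hB]; rfl)
  | conj _ _ ihC ihD =>
      exact ⟨ihC fun B hB => h B (Or.inl hB), ihD fun B hB => h B (Or.inr hB)⟩

theorem exists_disjunct_mem_cExt {D : DLConcept} (hD : IsDisjOfBasic D)
    (h : e ∈ I.cExt D) : ∃ B ∈ disjuncts D, e ∈ I.cExt B := by
  induction hD with
  | basic hB => exact ⟨_, by rw [disjuncts_eq_singleton hB]; rfl, h⟩
  | disj _ _ ihC ihD =>
      rcases h with h | h
      · obtain ⟨B, hB, he⟩ := ihC h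
        exact ⟨B, Or.inl hB, he⟩
      · obtain ⟨B, hB, he⟩ := ihD h
        exact ⟨B, Or.inr hB, he⟩

theorem roleExt_invert (r : DLRole) (x y : Elem) :
    (x, y) ∈ I.roleExt r.invert ↔ (y, x) ∈ I.roleExt r := by
  cases r <;> simp [DLRole.invert, Interp.roleExt]

theorem roleExt_subset_of_subRole {T : TBox} (hT : I.satTBox T) {r s : DLRole}
    (h : subRole T r s) : I.roleExt r ⊆ I.roleExt s := by
  induction h with
  | refl => exact subset_rfl
  | inv _ ih =>
      exact fun ⟨x, y⟩ hxy => (roleExt_invert _ x y).2 (ih ((roleExt_invert _ x y).1 hxy))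
  | step _ hmem ih => exact ih.trans (hT _ hmem)

theorem typeOf_isType {T : TBox} (he : e ∈ I.dom) : IsType T (typeOf T I e) :=
  ⟨fun _ hB => hB.1, ⟨Or.inl (Or.inl rfl), he⟩, fun h => h.2⟩

theorem typeSatN1_typeOf {T : TBox} {α : Inclusion} (hα : α ∈ T) (hN1 : IsN1 α)
    (hsat : I.satIncl α) : typeSatN1 (typeOf T I e) α := by
  cases α with
  | rolel => trivial
  | concl C D =>
      intro hC
      obtain ⟨B, hBD, heB⟩ := exists_disjunct_mem_cExt hN1.2
        (hsat (mem_cExt_of_conjuncts hN1.1 fun B hB => (hC hB).2))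
      have hBT : B ∈ TBox.basicConcepts T :=
        Or.inr (Set.mem_iUnion₂.mpr ⟨_, hα, Or.inr (disjuncts_subset_basics hN1.2 hBD)⟩)
      exact ⟨B, hBD, hBT, heB⟩

end Interp

namespace IsExtension

variable {J Ic : Interp} {sig : Set ClosedPred}

theorem mem_cExt_iff (hext : IsExtension J Ic sig) {d : Elem} (hd : d ∈ Ic.dom)
    {B : DLConcept} (hB : IsBasicConcept B) (hnom : ∀ a, B = .nom a → Ic.intI a = J.intI a) :
    d ∈ Ic.cExt B ↔ d ∈ J.cExt B := by
  cases hB with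
  | atom A =>
      show d ∈ Ic.intC A ↔ d ∈ J.intC A
      rw [hext.cAgree A]
      exact ⟨And.left, fun h => ⟨h, hd⟩⟩
  | top => exact ⟨fun _ => hext.dom_sub hd, fun _ => hd⟩
  | bot => exact Iff.rfl
  | nom a =>
      show d ∈ ({Ic.intI a} : Set Elem) ↔ d ∈ ({J.intI a} : Set Elem)
      rw [hnom a rfl]

theorem typeOf_eq {K : KB} (hext : IsExtension J Ic K.sig) (hc : IsCore Ic K)
    (hmod : isModel J K) {d : Elem} (hd : d ∈ Ic.dom) :
    typeOf K.tbox Ic d = typeOf K.tbox J d := by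
  ext B
  refine and_congr_right fun hB => hext.mem_cExt_iff hd
    (TBox.isBasicConcept_of_mem_basicConcepts hB) ?_
  rintro a rfl
  have ha := KB.mem_inds_of_nom_mem_basicConcepts hB
  rw [hc.sna a ha, (hmod.1 a ha).1]

theorem mem_dom_of_roleClosed {T : TBox} (hext : IsExtension J Ic sig) (hT : J.satTBox T)
    {r : DLRole} (hr : roleClosed T sig r) {e f : Elem} (hef : (e, f) ∈ J.roleExt r) :
    e ∈ Ic.dom := by
  obtain ⟨s, hrs, hs⟩ := hr
  have hefs := Interp.roleExt_subset_of_subRole hT hrs hef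
  cases s with
  | name p =>
      have hefp : (e, f) ∈ J.intR p := hefs
      exact (Ic.intR_sub p _ (hext.closedR p hs ▸ hefp)).1
  | inv p =>
      have hfep : (f, e) ∈ J.intR p := hefs
      exact (Ic.intR_sub p _ (hext.closedR p hs ▸ hfep)).2

theorem mem_dom_of_isCType {K : KB} (hext : IsExtension J Ic K.sig) (hc : IsCore Ic K)
    (hmod : isModel J K) {e : Elem} (hct : IsCType K.tbox K.sig (typeOf K.tbox J e)) :
    e ∈ Ic.dom := by
  rcases hct with ⟨a, ha, rfl⟩ | ⟨A, ⟨-, heA⟩, hA⟩ | ⟨A, r, A', hα, hr, -, heA⟩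
  · have ha := KB.mem_inds_of_nom_mem_basicConcepts ha
    exact (hmod.1 a ha).1 ▸ hc.inds_sub a ha
  · exact Ic.intC_sub A (hext.closedC A hA ▸ heA)
  · obtain ⟨f, hef, -⟩ := hmod.2.1 _ hα heA
    exact hext.mem_dom_of_roleClosed hmod.2.1 hr hef

end IsExtension

/-- Let `K = (T, Σ, A)` be a KB with closed predicates with
`T` in normal form, `I_c` a core for `K`, and `J` a model of `K` extending
`I_c`. Then every type realized in `J` belongs to `LC(T, Σ, I_c)`; in
particular, for every individual `a` occurring in `K`,
`type(a, J) ∈ LC(T, Σ, I_c)`. -/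
theorem stmt11_realized_in_LC (K : KB) (hnf : NormalTBox K.tbox)
    (Ic : Interp) (hc : IsCore Ic K)
    (J : Interp) (hext : IsExtension J Ic K.sig) (hmod : isModel J K) :
    (∀ e ∈ J.dom, typeOf K.tbox J e ∈ LC K.tbox K.sig Ic) ∧
    (∀ a ∈ K.inds, typeOf K.tbox J (J.intI a) ∈ LC K.tbox K.sig Ic) := by
  have hLC : ∀ e ∈ J.dom, typeOf K.tbox J e ∈ LC K.tbox K.sig Ic := fun e he =>
    ⟨Interp.typeOf_isType he,
      fun α hα hN1 => Interp.typeSatN1_typeOf hα hN1 (hmod.2.1 α hα),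
      fun hct =>
        have hcore := hext.mem_dom_of_isCType hc hmod hct
        ⟨e, hcore, hext.typeOf_eq hc hmod hcore⟩⟩
  exact ⟨hLC, fun a _ => hLC _ (J.intI_mem a)⟩
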